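/- arXiv:2512.02452 — 4 statements merged into one kernel-verified Lean document; each statement's English description precedes it below -/
import Mathlib

section
/- Let n ≥ 1, let L₁ ∈ ℝ, L₂ ≥ 0, and let b̲ > 0. Suppose the PID gains k_p, k_i, k_d ∈ ℝ have the property that for every f ∈ F_{L₁,L₂}, every input gain b ≥ b̲, every setpoint y* ∈ ℝⁿ, and every global solution (x₁, x₂) of the PID-controlled closed-loop system with arbitrary initial conditions, lim_{t→∞} x₁(t) = y* and lim_{t→∞} x₂(t) = 0. Then necessarily (b̲·k_p, b̲·k_i, b̲·k_d) ∈ Ω_pid^(2). -/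
open scoped InnerProductSpace
open Filter Topology

noncomputable section

abbrev Euc (n : ℕ) := EuclideanSpace ℝ (Fin n)

variable {n : ℕ}

/-- The Jacobian of `f : ℝⁿ × ℝⁿ → ℝⁿ` with respect to its first argument. -/
def Jx1 (f : Euc n × Euc n → Euc n) (p : Euc n × Euc n) : Euc n →L[ℝ] Euc n :=
  (fderiv ℝ f p).comp (ContinuousLinearMap.inl ℝ (Euc n) (Euc n))

/-- The Jacobian of `f : ℝⁿ × ℝⁿ → ℝⁿ` with respect to its second argument. -/
def Jx2 (f : Euc n × Euc n → Euc n) (p : Euc n × Euc n) : Euc n →L[ℝ] Euc n :=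
  (fderiv ℝ f p).comp (ContinuousLinearMap.inr ℝ (Euc n) (Euc n))

/-- The class `F_{L₁,L₂}`. -/
def MemF (L₁ L₂ : ℝ) (f : Euc n × Euc n → Euc n) : Prop :=
  ContDiff ℝ 1 f ∧
  (∀ (p : Euc n × Euc n) (v : Euc n), ⟪Jx1 f p v, v⟫_ℝ ≤ L₁ * ‖v‖ ^ 2) ∧
  (∀ p : Euc n × Euc n, ‖Jx2 f p‖ ≤ L₂) ∧
  (∀ x₁ v w : Euc n, ⟪Jx1 f (x₁, 0) v, w⟫_ℝ = ⟪Jx1 f (x₁, 0) w, v⟫_ℝ)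

/-- The necessary region `Ω_pid^(2)` of PID gains `(k_p, k_i, k_d)`. -/
def OmegaPid2 (L₁ L₂ : ℝ) : Set (ℝ × ℝ × ℝ) :=
  {k : ℝ × ℝ × ℝ | L₁ < k.1 ∧ 0 < k.2.1 ∧ L₂ < k.2.2 ∧
    k.2.1 < (k.1 - L₁) * (k.2.2 - L₂)}

/-- `(x₁, x₂)` is a global solution on `[0,∞)` of the PID-controlled closed-loop system
`ẋ₁ = x₂`, `ẋ₂ = f(x₁,x₂) + b u`, with `u = k_p e + k_i ∫₀ᵗ e + k_d ė`, `e = y* - x₁`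
(so that `ė = -x₂`). -/
def IsClosedLoopSol (f : Euc n × Euc n → Euc n) (b kp ki kd : ℝ) (ystar : Euc n)
    (x₁ x₂ : ℝ → Euc n) : Prop :=
  ∀ t : ℝ, 0 ≤ t →
    HasDerivAt x₁ (x₂ t) t ∧
    HasDerivAt x₂ (f (x₁ t, x₂ t) + b •
      (kp • (ystar - x₁ t) + ki • (∫ s in (0:ℝ)..t, (ystar - x₁ s)) + kd • (-(x₂ t)))) t

/-!
Test the controller on the affine fields `f(x₁, x₂) = L₁ x₁ + L₂ x₂ + d`, which lie in
`F_{L₁,L₂}`. Along a fixed direction, every root `μ` of the closed-loop characteristic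
polynomial `μ³ + (b̲k_d - L₂)μ² + (b̲k_p - L₁)μ + b̲k_i` yields solutions
`x₁(t) = Re(c μ e^{μt})`, which do not tend to `0` when `Re μ ≥ 0` (for `μ = 0` a constant
offset is used instead). Hence the polynomial is Hurwitz, and splitting off its negative
real root shows that a real cubic is Hurwitz only if its coefficients satisfy the
Routh–Hurwitz conditions, which are the inequalities defining `Ω_pid^(2)`.
-/

theorem exists_cubic_eq_zero (a₂ a₁ a₀ : ℝ) : ∃ x : ℝ, x ^ 3 + a₂ * x ^ 2 + a₁ * x + a₀ = 0 := by
  set M := 1 + |a₂| + |a₁| + |a₀|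
  have hM : 1 ≤ M := by simp only [M]; linarith [abs_nonneg a₂, abs_nonneg a₁, abs_nonneg a₀]
  have hM2 : 0 ≤ M ^ 2 := sq_nonneg M
  refine mem_range_of_exists_le_of_exists_ge (by fun_prop) ⟨-M, ?_⟩ ⟨M, ?_⟩
  · nlinarith [mul_le_mul_of_nonneg_right (le_abs_self a₂) hM2,
      mul_le_mul_of_nonneg_right (neg_abs_le a₁) (by linarith : (0:ℝ) ≤ M),
      mul_le_mul_of_nonneg_left hM (abs_nonneg a₁), le_abs_self a₀,
      mul_le_mul_of_nonneg_left (one_le_pow₀ hM : (1:ℝ) ≤ M ^ 2) (abs_nonneg a₀)]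
  · nlinarith [mul_le_mul_of_nonneg_right (neg_abs_le a₂) hM2,
      mul_le_mul_of_nonneg_right (neg_abs_le a₁) (by linarith : (0:ℝ) ≤ M),
      mul_le_mul_of_nonneg_left hM (abs_nonneg a₁), neg_abs_le a₀,
      mul_le_mul_of_nonneg_left (one_le_pow₀ hM : (1:ℝ) ≤ M ^ 2) (abs_nonneg a₀)]

theorem quadratic_coeffs_pos_of_re_neg (β γ : ℝ)
    (h : ∀ z : ℂ, z ^ 2 + β * z + γ = 0 → z.re < 0) : 0 < β ∧ 0 < γ := by
  constructor
  · obtain ⟨s, hs⟩ := IsAlgClosed.exists_eq_mul_self (discrim 1 (β : ℂ) γ)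
    obtain ⟨r, hr⟩ := exists_quadratic_eq_zero one_ne_zero ⟨s, hs⟩
    have h₁ := h r (by linear_combination hr)
    have h₂ := h (-β - r) (by linear_combination hr)
    simp only [Complex.sub_re, Complex.neg_re, Complex.ofReal_re] at h₂
    linarith
  · by_contra! hγ
    set t := √(β ^ 2 - 4 * γ)
    have ht : t ^ 2 = β ^ 2 - 4 * γ := Real.sq_sqrt (by nlinarith)
    have hβt : β ≤ t := (le_abs_self β).trans (Real.abs_le_sqrt (by linarith))
    have htℂ : (t : ℂ) ^ 2 = β ^ 2 - 4 * γ := by exact_mod_cast ht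
    have := h ((-β + t) / 2 : ℝ) (by push_cast; linear_combination htℂ / 4)
    simp only [Complex.ofReal_re] at this
    linarith

theorem cubic_routh_hurwitz (a₂ a₁ a₀ : ℝ)
    (h : ∀ z : ℂ, z ^ 3 + a₂ * z ^ 2 + a₁ * z + a₀ = 0 → z.re < 0) :
    0 < a₂ ∧ 0 < a₁ ∧ 0 < a₀ ∧ a₀ < a₂ * a₁ := by
  obtain ⟨ρ, hρ⟩ := exists_cubic_eq_zero a₂ a₁ a₀
  have hρℂ : (ρ : ℂ) ^ 3 + a₂ * ρ ^ 2 + a₁ * ρ + a₀ = 0 := by exact_mod_cast hρ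
  have hρneg : ρ < 0 := by simpa using h ρ hρℂ
  obtain ⟨hβ, hγ⟩ :=
    quadratic_coeffs_pos_of_re_neg (a₂ + ρ) (ρ ^ 2 + a₂ * ρ + a₁) fun z hz =>
      h z (by push_cast at hz ⊢; linear_combination (z - ρ) * hz + hρℂ)
  -- With `β = a₂ + ρ`, `γ = ρ² + a₂ρ + a₁`: `a₁ = γ - ρβ`, `a₀ = -ργ`, `a₂a₁ - a₀ = β(γ - ρβ + ρ²)`.
  have hρβ := mul_pos (neg_pos.2 hρneg) hβ
  refine ⟨by linarith, by nlinarith, by nlinarith, ?_⟩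
  nlinarith [mul_pos hβ hγ, mul_pos hβ hρβ, mul_nonneg hβ.le (sq_nonneg ρ)]

theorem hasDerivAt_re_mul_cexp (c μ : ℂ) (t : ℝ) :
    HasDerivAt (fun s : ℝ => (c * Complex.exp (μ * s)).re)
      (c * μ * Complex.exp (μ * t)).re t := by
  have h : HasDerivAt (fun w : ℂ => c * Complex.exp (μ * w)) (c * μ * Complex.exp (μ * t)) t :=
    (((Complex.hasDerivAt_exp (μ * t)).comp (t : ℂ)
      ((hasDerivAt_id (t : ℂ)).const_mul μ)).const_mul c).congr_deriv (by ring)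
  exact h.real_of_complex

theorem tendsto_zero_of_forall_tendsto_re_mul {α : Type*} {l : Filter α} {w : α → ℂ}
    (h : ∀ c : ℂ, Tendsto (fun x => (c * w x).re) l (𝓝 0)) : Tendsto w l (𝓝 0) := by
  have hre := Complex.continuous_ofReal.tendsto 0 |>.comp (h 1)
  have him := Complex.continuous_ofReal.tendsto 0 |>.comp (h (-Complex.I))
  convert hre.add (him.mul_const Complex.I) using 1
  · ext x; simp [Complex.re_add_im]
  · simp

theorem not_tendsto_mul_cexp {μ : ℂ} (hμ : μ ≠ 0) (hre : 0 ≤ μ.re) :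
    ¬ Tendsto (fun t : ℝ => μ * Complex.exp (μ * t)) atTop (𝓝 0) := by
  intro h
  obtain ⟨t, ht, hlt⟩ := ((eventually_ge_atTop 0).and
    ((tendsto_zero_iff_norm_tendsto_zero.1 h).eventually_lt_const (norm_pos_iff.2 hμ))).exists
  have : 1 ≤ Real.exp (μ.re * t) := Real.one_le_exp (mul_nonneg hre ht)
  rw [norm_mul, Complex.norm_exp] at hlt
  simp only [Complex.mul_re, Complex.ofReal_re, Complex.ofReal_im, mul_zero, sub_zero] at hlt
  nlinarith [norm_pos_iff.2 hμ]

theorem tendsto_zero_of_tendsto_smul_const {α E : Type*} [NormedAddCommGroup E] [NormedSpace ℝ E]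
    {l : Filter α} {g : α → ℝ} {v : E} (hv : v ≠ 0)
    (h : Tendsto (fun x => g x • v) l (𝓝 0)) : Tendsto g l (𝓝 0) := by
  rw [tendsto_zero_iff_norm_tendsto_zero] at h ⊢
  simpa [norm_smul, hv] using h.div_const ‖v‖

def affineField (L₁ L₂ : ℝ) (d : Euc n) : Euc n × Euc n → Euc n :=
  fun p => L₁ • p.1 + L₂ • p.2 + d

theorem fderiv_affineField (L₁ L₂ : ℝ) (d : Euc n) (p : Euc n × Euc n) :
    fderiv ℝ (affineField L₁ L₂ d) p =
      L₁ • ContinuousLinearMap.fst ℝ (Euc n) (Euc n) +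
        L₂ • ContinuousLinearMap.snd ℝ (Euc n) (Euc n) :=
  (((ContinuousLinearMap.fst ℝ (Euc n) (Euc n)).hasFDerivAt.const_smul L₁).add
    ((ContinuousLinearMap.snd ℝ (Euc n) (Euc n)).hasFDerivAt.const_smul L₂)
    |>.add_const d).fderiv

theorem memF_affineField (L₁ : ℝ) {L₂ : ℝ} (hL₂ : 0 ≤ L₂) (d : Euc n) :
    MemF L₁ L₂ (affineField L₁ L₂ d) := by
  have hJ₁ : ∀ p, Jx1 (affineField L₁ L₂ d) p = L₁ • ContinuousLinearMap.id ℝ (Euc n) := by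
    intro p; ext1 v; simp [Jx1, fderiv_affineField]
  have hJ₂ : ∀ p, Jx2 (affineField L₁ L₂ d) p = L₂ • ContinuousLinearMap.id ℝ (Euc n) := by
    intro p; ext1 v; simp [Jx2, fderiv_affineField]
  refine ⟨by unfold affineField; fun_prop, fun p v => ?_, fun p => ?_, fun x₁ v w => ?_⟩
  · simp [hJ₁, real_inner_smul_left]
  · exact ContinuousLinearMap.opNorm_le_bound _ hL₂ fun v => by
      simp [hJ₂, norm_smul, abs_of_nonneg hL₂]
  · simp [hJ₁, real_inner_smul_left, real_inner_comm v w]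

section ClosedLoop

variable {L₁ L₂ b kp ki kd : ℝ}

/-- Along `v`, `z` is an antiderivative of `x₁`, so the integral term of the controller is
`(z 0 - z t) • v`; the constant `z 0` is absorbed into the offset of the field. -/
theorem isClosedLoopSol_affineField_of_ode (v : Euc n) {z z' z'' z''' : ℝ → ℝ} (c : ℝ)
    (hz : ∀ t, HasDerivAt z (z' t) t) (hz' : ∀ t, HasDerivAt z' (z'' t) t)
    (hz'' : ∀ t, HasDerivAt z'' (z''' t) t)
    (hode : ∀ t, z''' t + (b * kd - L₂) * z'' t + (b * kp - L₁) * z' t + b * ki * z t = c) :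
    IsClosedLoopSol (affineField L₁ L₂ ((c - b * ki * z 0) • v)) b kp ki kd 0
      (fun t => z' t • v) (fun t => z'' t • v) := by
  intro t _
  have hint : ∫ s in (0 : ℝ)..t, (0 - z' s • v) = (z 0 - z t) • v := by
    have hcont : Continuous z' := continuous_iff_continuousAt.2 fun s => (hz' s).continuousAt
    simp only [zero_sub, ← neg_smul]
    rw [intervalIntegral.integral_smul_const, intervalIntegral.integral_neg,
      intervalIntegral.integral_eq_sub_of_hasDerivAt (fun s _ => hz s)
        (hcont.intervalIntegrable 0 t), neg_sub]
  refine ⟨(hz' t).smul_const v, ?_⟩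
  refine ((hz'' t).smul_const v).congr_deriv ?_
  rw [hint, affineField]
  match_scalars
  linear_combination hode t

variable {v : Euc n}

theorem tendsto_re_mul_cexp_of_closedLoop_tendsto
    (hstab : ∀ (d : Euc n) (x₁ x₂ : ℝ → Euc n),
      IsClosedLoopSol (affineField L₁ L₂ d) b kp ki kd 0 x₁ x₂ → Tendsto x₁ atTop (𝓝 0))
    (hv : v ≠ 0) {μ : ℂ}
    (hμ : μ ^ 3 + ((b * kd - L₂ : ℝ) : ℂ) * μ ^ 2 + ((b * kp - L₁ : ℝ) : ℂ) * μ
      + ((b * ki : ℝ) : ℂ) = 0) (c : ℂ) :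
    Tendsto (fun t : ℝ => (c * (μ * Complex.exp (μ * t))).re) atTop (𝓝 0) := by
  have hderiv : ∀ k : ℕ, ∀ t : ℝ, HasDerivAt (fun s : ℝ => (c * μ ^ k * Complex.exp (μ * s)).re)
      (c * μ ^ (k + 1) * Complex.exp (μ * t)).re t := fun k t =>
    (hasDerivAt_re_mul_cexp _ μ t).congr_deriv (congr_arg Complex.re (by ring))
  have hx₁ := hstab _ _ _ <| isClosedLoopSol_affineField_of_ode v 0 (hderiv 0) (hderiv 1)
    (hderiv 2) fun t => by
      simp only [← Complex.re_ofReal_mul, ← Complex.add_re, ← Complex.zero_re]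
      congr 1
      linear_combination c * Complex.exp (μ * t) * hμ
  simpa only [zero_add, pow_one, mul_assoc] using tendsto_zero_of_tendsto_smul_const hv hx₁

theorem re_neg_of_closedLoop_tendsto
    (hstab : ∀ (d : Euc n) (x₁ x₂ : ℝ → Euc n),
      IsClosedLoopSol (affineField L₁ L₂ d) b kp ki kd 0 x₁ x₂ → Tendsto x₁ atTop (𝓝 0))
    (hv : v ≠ 0) (μ : ℂ)
    (hμ : μ ^ 3 + ((b * kd - L₂ : ℝ) : ℂ) * μ ^ 2 + ((b * kp - L₁ : ℝ) : ℂ) * μ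
      + ((b * ki : ℝ) : ℂ) = 0) : μ.re < 0 := by
  by_contra! hre
  rcases eq_or_ne μ 0 with rfl | hμ₀
  · have hki : b * ki = 0 := by simpa using hμ
    -- A zero integral gain leaves a constant offset uncorrected: `z = t` gives `x₁ ≡ v`.
    have hx₁ := hstab _ _ _ <| isClosedLoopSol_affineField_of_ode v (b * kp - L₁) hasDerivAt_id
      (fun t => hasDerivAt_const t 1) (fun t => hasDerivAt_const t 0) (fun t => by simp [hki])
    exact hv (by simpa using hx₁)
  · exact not_tendsto_mul_cexp hμ₀ hre (tendsto_zero_of_forall_tendsto_re_mul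
      (tendsto_re_mul_cexp_of_closedLoop_tendsto hstab hv hμ))

end ClosedLoop

theorem pid_necessity_general (n : ℕ) (hn : 1 ≤ n) (L₁ L₂ : ℝ) (hL₂ : 0 ≤ L₂)
    (blow : ℝ) (kp ki kd : ℝ)
    (hstab : ∀ f : Euc n × Euc n → Euc n, MemF L₁ L₂ f →
      ∀ b : ℝ, blow ≤ b →
      ∀ ystar : Euc n, ∀ x₁ x₂ : ℝ → Euc n,
        IsClosedLoopSol f b kp ki kd ystar x₁ x₂ →
        Tendsto x₁ atTop (𝓝 ystar) ∧ Tendsto x₂ atTop (𝓝 0)) :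
    (blow * kp, blow * ki, blow * kd) ∈ OmegaPid2 L₁ L₂ := by
  have hv : (EuclideanSpace.single (⟨0, hn⟩ : Fin n) 1 : Euc n) ≠ 0 := by simp
  obtain ⟨hkd, hkp, hki, hprod⟩ :=
    cubic_routh_hurwitz (blow * kd - L₂) (blow * kp - L₁) (blow * ki) <|
      re_neg_of_closedLoop_tendsto (fun d x₁ x₂ hsol =>
        (hstab _ (memF_affineField L₁ hL₂ d) blow le_rfl 0 x₁ x₂ hsol).1) hv
  refine ⟨?_, ?_, ?_, ?_⟩ <;> dsimp only <;> linarith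

/-- Theorem 1(ii): if the PID gains achieve global asymptotic tracking for every
`f ∈ F_{L₁,L₂}`, every `b ≥ b̲`, every setpoint and every global solution, then
necessarily `(b̲ k_p, b̲ k_i, b̲ k_d) ∈ Ω_pid^(2)`. -/
theorem pid_necessity (n : ℕ) (hn : 1 ≤ n) (L₁ L₂ : ℝ) (hL₂ : 0 ≤ L₂)
    (blow : ℝ) (hblow : 0 < blow) (kp ki kd : ℝ)
    (hstab : ∀ f : Euc n × Euc n → Euc n, MemF L₁ L₂ f →
      ∀ b : ℝ, blow ≤ b →
      ∀ ystar : Euc n, ∀ x₁ x₂ : ℝ → Euc n,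
        IsClosedLoopSol f b kp ki kd ystar x₁ x₂ →
        Tendsto x₁ atTop (𝓝 ystar) ∧ Tendsto x₂ atTop (𝓝 0)) :
    (blow * kp, blow * ki, blow * kd) ∈ OmegaPid2 L₁ L₂ :=
  pid_necessity_general n hn L₁ L₂ hL₂ blow kp ki kd hstab
end
end

section
/- Let L₂ ≥ 0 and let k₀, φ₀, ψ₀ be positive real numbers satisfying φ₀ψ₀ − k₀ > 2L₂√(k₀ψ₀). Define μ = (φ₀ψ₀ + k₀)/(2(φ₀ + L₂²)). Then the following three inequalities hold: (i) ψ₀ > μ; (ii) (μφ₀ − k₀)(ψ₀ − μ) > μ²L₂²; (iii) μφ₀ > k₀. -/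
/-!
The choice of `μ` is the vertex of the concave quadratic
`f(m) = (m φ₀ - k₀)(ψ₀ - m) - m² L₂² = -(φ₀ + L₂²) m² + (φ₀ψ₀ + k₀) m - k₀ψ₀`,
whose maximum value is `((φ₀ψ₀ - k₀)² - 4 L₂² k₀ψ₀) / (4 (φ₀ + L₂²))`. Squaring the hypothesis
makes this discriminant positive, which is (ii). Then both factors of `(μφ₀ - k₀)(ψ₀ - μ)`
have the same sign, and they cannot both be negative since `k₀ < φ₀ψ₀`; this gives (i) and (iii).
-/

lemma four_mul_sq_mul_lt_sq_of_two_mul_mul_sqrt_lt {L x A : ℝ} (hL : 0 ≤ L)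
    (h : 2 * L * √x < A) : 4 * L ^ 2 * x < A ^ 2 :=
  calc 4 * L ^ 2 * x ≤ 4 * L ^ 2 * max x 0 := by gcongr; exact le_max_left x 0
    _ = (2 * L * √x) ^ 2 := by rw [mul_pow, mul_pow, Real.sq_sqrt']; ring
    _ < A ^ 2 := by gcongr

lemma mul_sub_mul_sub_sub_sq_mul_at_vertex {L k φ ψ : ℝ} (hφL : φ + L ^ 2 ≠ 0) :
    let μ := (φ * ψ + k) / (2 * (φ + L ^ 2))
    (μ * φ - k) * (ψ - μ) - μ ^ 2 * L ^ 2 =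
      ((φ * ψ - k) ^ 2 - 4 * L ^ 2 * (k * ψ)) / (4 * (φ + L ^ 2)) := by
  intro μ
  simp only [μ]
  field_simp
  ring

lemma lt_and_lt_mul_of_mul_sub_pos {k φ ψ μ : ℝ} (hφ : 0 < φ) (hk : k < φ * ψ)
    (h : 0 < (μ * φ - k) * (ψ - μ)) : μ < ψ ∧ k < μ * φ := by
  rcases mul_pos_iff.mp h with ⟨hkμ, hμψ⟩ | ⟨hkμ, hμψ⟩
  · exact ⟨by linarith, by linarith⟩
  · nlinarith

theorem mu_inequalities_general (L₂ k₀ φ₀ ψ₀ : ℝ) (hL₂ : 0 ≤ L₂)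
    (hφ₀ : 0 < φ₀)
    (h : 2 * L₂ * Real.sqrt (k₀ * ψ₀) < φ₀ * ψ₀ - k₀) :
    let μ := (φ₀ * ψ₀ + k₀) / (2 * (φ₀ + L₂ ^ 2))
    ψ₀ > μ ∧ (μ * φ₀ - k₀) * (ψ₀ - μ) > μ ^ 2 * L₂ ^ 2 ∧ μ * φ₀ > k₀ := by
  intro μ
  have hφL : 0 < φ₀ + L₂ ^ 2 := by positivity
  have hdisc := four_mul_sq_mul_lt_sq_of_two_mul_mul_sqrt_lt hL₂ h
  have hk : k₀ < φ₀ * ψ₀ := by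
    have : 0 ≤ 2 * L₂ * Real.sqrt (k₀ * ψ₀) := by positivity
    linarith
  have hii : μ ^ 2 * L₂ ^ 2 < (μ * φ₀ - k₀) * (ψ₀ - μ) := by
    have hvertex := mul_sub_mul_sub_sub_sq_mul_at_vertex (k := k₀) (ψ := ψ₀) hφL.ne'
    have : 0 < ((φ₀ * ψ₀ - k₀) ^ 2 - 4 * L₂ ^ 2 * (k₀ * ψ₀)) / (4 * (φ₀ + L₂ ^ 2)) := by
      apply div_pos <;> linarith
    linarith
  obtain ⟨hi, hiii⟩ :=
    lt_and_lt_mul_of_mul_sub_pos hφ₀ hk (lt_of_le_of_lt (by positivity) hii)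
  exact ⟨hi, hii, hiii⟩

/-- The three key inequalities \eqref{eqB1}–\eqref{eqB3}: if
`φ₀ψ₀ − k₀ > 2L₂√(k₀ψ₀)` and `μ = (φ₀ψ₀ + k₀)/(2(φ₀ + L₂²))`, then
`ψ₀ > μ`, `(μφ₀ − k₀)(ψ₀ − μ) > μ²L₂²` and `μφ₀ > k₀`. -/
theorem mu_inequalities (L₂ k₀ φ₀ ψ₀ : ℝ) (hL₂ : 0 ≤ L₂)
    (hk₀ : 0 < k₀) (hφ₀ : 0 < φ₀) (hψ₀ : 0 < ψ₀)
    (h : 2 * L₂ * Real.sqrt (k₀ * ψ₀) < φ₀ * ψ₀ - k₀) :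
    let μ := (φ₀ * ψ₀ + k₀) / (2 * (φ₀ + L₂ ^ 2))
    ψ₀ > μ ∧ (μ * φ₀ - k₀) * (ψ₀ - μ) > μ ^ 2 * L₂ ^ 2 ∧ μ * φ₀ > k₀ :=
  mu_inequalities_general L₂ k₀ φ₀ ψ₀ hL₂ hφ₀ h
end

section
/- Let k₀ > 0, μ > 0, and let φ₀, ψ₀, ψ be real numbers with ψ ≥ ψ₀ > μ and μφ₀ > k₀. Then the 3×3 real symmetric matrix P₃ = ½·[[μk₀, k₀, 0], [k₀, φ₀ + μψ, μ], [0, μ, 1]] is positive definite. Consequently, for any n ≥ 1, the Kronecker product P = P₃ ⊗ I_n is positive definite. -/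
open Matrix Kronecker

/-! Completing squares gives, for `A = 2 P₃`,
`μ xᵀ A x = k₀ (μ x₀ + x₁)² + (μ φ₀ - k₀ + μ² (ψ - μ)) x₁² + μ (x₂ + μ x₁)²`,
so `μ A` is congruent, through an invertible matrix, to a diagonal matrix whose entries are
positive under the hypotheses. Positive definiteness then passes to `P₃ ⊗ I_n` because `I_n` is
positive definite and Kronecker products preserve positive definiteness. -/

lemma smul_fin_three_eq_transpose_mul_diagonal_mul (k₀ μ φ₀ ψ : ℝ) :
    μ • !![μ * k₀, k₀, 0; k₀, φ₀ + μ * ψ, μ; 0, μ, 1] =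
      !![μ, 1, 0; 0, 1, 0; 0, μ, 1]ᵀ * diagonal ![k₀, μ * φ₀ - k₀ + μ ^ 2 * (ψ - μ), μ] *
        !![μ, 1, 0; 0, 1, 0; 0, μ, 1] := by
  ext i j
  fin_cases i <;> fin_cases j <;> simp [Matrix.mul_apply, Fin.sum_univ_three] <;> ring

lemma posDef_fin_three_of_pos {k₀ μ φ₀ ψ : ℝ} (hk₀ : 0 < k₀) (hμ : 0 < μ)
    (hc : 0 < μ * φ₀ - k₀ + μ ^ 2 * (ψ - μ)) :
    (!![μ * k₀, k₀, 0; k₀, φ₀ + μ * ψ, μ; 0, μ, 1]).PosDef := by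
  have hD : (diagonal ![k₀, μ * φ₀ - k₀ + μ ^ 2 * (ψ - μ), μ]).PosDef :=
    posDef_diagonal_iff.mpr fun i => by fin_cases i <;> simpa
  have hL : Function.Injective (!![μ, 1, 0; 0, 1, 0; 0, μ, 1]).mulVec :=
    mulVec_injective_of_isUnit <| (isUnit_iff_isUnit_det _).mpr <| by
      simpa [det_fin_three] using hμ.ne'
  have h := (hD.conjTranspose_mul_mul_same hL).smul (inv_pos.mpr hμ)
  rwa [conjTranspose_eq_transpose_of_trivial, ← smul_fin_three_eq_transpose_mul_diagonal_mul,
    inv_smul_smul₀ hμ.ne'] at h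

/-- Positive definiteness of the matrix `P₃ = ½[[μk₀, k₀, 0], [k₀, φ₀+μψ, μ], [0, μ, 1]]`
and of its Kronecker product with the identity `I_n`, under `k₀ > 0`, `μ > 0`,
`ψ ≥ ψ₀ > μ` and `μφ₀ > k₀`. -/
theorem P_posdef (k₀ μ φ₀ ψ₀ ψ : ℝ) (hk₀ : 0 < k₀) (hμ : 0 < μ)
    (hψ : ψ₀ ≤ ψ) (hψ₀ : μ < ψ₀) (hφ₀ : k₀ < μ * φ₀) :
    let P₃ : Matrix (Fin 3) (Fin 3) ℝ :=
      (1 / 2 : ℝ) • !![μ * k₀, k₀, 0; k₀, φ₀ + μ * ψ, μ; 0, μ, 1]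
    P₃.PosDef ∧
    ∀ n : ℕ, 1 ≤ n → (P₃ ⊗ₖ (1 : Matrix (Fin n) (Fin n) ℝ)).PosDef := by
  intro P₃
  have hc : 0 < μ * φ₀ - k₀ + μ ^ 2 * (ψ - μ) := by
    have := mul_pos (pow_pos hμ 2) (sub_pos.mpr (hψ₀.trans_le hψ))
    linarith
  have hP₃ : P₃.PosDef := (posDef_fin_three_of_pos hk₀ hμ hc).smul (by norm_num)
  exact ⟨hP₃, fun n _ => hP₃.kronecker .one⟩
end

section
/- Let L₁ ∈ ℝ, L₂ ≥ 0, and let f ∈ G_{L₁,L₂}. Then there exist a scalar function U : ℝⁿ → ℝ and a twice continuously differentiable scalar function S : ℝⁿ → ℝ such that f(x₁, x₂) = ∇U(x₁) + ∇²S(x₁)·x₂ for all x₁, x₂ ∈ ℝⁿ. -/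
open scoped InnerProductSpace

noncomputable section

variable {n : ℕ}

/-- The Hessian of each component of `f` with respect to `x₂` vanishes identically. -/
def HessX2Zero (f : Euc n × Euc n → Euc n) : Prop :=
  ∀ x₁ x₂ v w : Euc n,
    fderiv ℝ (fun z => fderiv ℝ (fun z' => f (x₁, z')) z v) x₂ w = 0

/-- The class `G_{L₁,L₂} ⊆ F_{L₁,L₂}`. -/
def MemG (L₁ L₂ : ℝ) (f : Euc n × Euc n → Euc n) : Prop :=
  ContDiff ℝ 2 f ∧ MemF L₁ L₂ f ∧ HessX2Zero f ∧
  ∃ S : Euc n → ℝ, ContDiff ℝ 2 S ∧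
    ∀ x₁ v : Euc n, Jx2 f (x₁, (0 : Euc n)) v = fderiv ℝ (gradient S) x₁ v

/-!
Since the second `x₂`-derivative of `f` vanishes, each slice `x₂ ↦ f (x₁, x₂)` is affine, with
linear part `∂f/∂x₂ (x₁, 0) = ∇²S(x₁)`. The remaining field `x₁ ↦ f (x₁, 0)` has a symmetric
Jacobian, so the 1-form `⟪f (·, 0), ·⟫` is closed on the convex set `ℝⁿ`; by the Poincaré lemma
it is exact, i.e. `f (·, 0) = ∇U`.
-/

theorem exists_forall_hasGradientAt_of_fderiv_symmetric {E : Type*} [NormedAddCommGroup E]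
    [InnerProductSpace ℝ E] [CompleteSpace E] {g : E → E} (hg : Differentiable ℝ g)
    (hsym : ∀ x v w : E, ⟪fderiv ℝ g x v, w⟫_ℝ = ⟪fderiv ℝ g x w, v⟫_ℝ) :
    ∃ U : E → ℝ, ∀ x, HasGradientAt U (g x) x := by
  have hω : Differentiable ℝ fun x => innerSL ℝ (g x) := (innerSL ℝ).differentiable.comp hg
  obtain ⟨U, hU⟩ := convex_univ.exists_forall_hasFDerivAt_of_fderiv_symmetric isOpen_univ
    hω.differentiableOn fun x _ v w => by
      rw [fderiv_fun_comp x (innerSL ℝ).differentiableAt (hg x), ContinuousLinearMap.fderiv]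
      exact hsym x v w
  exact ⟨U, fun x => hU x trivial⟩

theorem ContDiff.eq_add_fderiv_of_fderiv_fderiv_apply_eq_zero {E F : Type*}
    [NormedAddCommGroup E] [NormedSpace ℝ E] [NormedAddCommGroup F] [NormedSpace ℝ F]
    {k : E → F} (hk : ContDiff ℝ 2 k)
    (h : ∀ z v w : E, fderiv ℝ (fun z => fderiv ℝ k z v) z w = 0) (z : E) :
    k z = k 0 + fderiv ℝ k 0 z := by
  have hfderiv_const (y : E) : fderiv ℝ k y = fderiv ℝ k 0 := ContinuousLinearMap.ext fun v =>
    is_const_of_fderiv_eq_zero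
      (((hk.fderiv_right le_rfl).differentiable one_ne_zero).clm_apply (differentiable_const v))
      (fun y' => ContinuousLinearMap.ext (h y' v)) y 0
  have haffine := eq_of_fderiv_eq (hk.differentiable two_ne_zero)
    (g := fun y => k 0 + fderiv ℝ k 0 y) (by fun_prop)
    (fun y => by rw [hfderiv_const y, fderiv_const_add, ContinuousLinearMap.fderiv]) 0 (by simp)
  exact congrFun haffine z

theorem hasFDerivAt_Jx1 {f : Euc n × Euc n → Euc n} {p : Euc n × Euc n}
    (hf : DifferentiableAt ℝ f p) : HasFDerivAt (fun x => f (x, p.2)) (Jx1 f p) p.1 :=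
  hf.hasFDerivAt.comp p.1 (hasFDerivAt_prodMk_left p.1 p.2)

theorem hasFDerivAt_Jx2 {f : Euc n × Euc n → Euc n} {p : Euc n × Euc n}
    (hf : DifferentiableAt ℝ f p) : HasFDerivAt (fun y => f (p.1, y)) (Jx2 f p) p.2 :=
  hf.hasFDerivAt.comp p.2 (hasFDerivAt_prodMk_right p.1 p.2)

theorem memG_decomposition_general (n : ℕ) (L₁ L₂ : ℝ)
    (f : Euc n × Euc n → Euc n) (hf : MemG L₁ L₂ f) :
    ∃ (U S : Euc n → ℝ), Differentiable ℝ U ∧ ContDiff ℝ 2 S ∧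
      ∀ x₁ x₂ : Euc n,
        f (x₁, x₂) = gradient U x₁ + fderiv ℝ (gradient S) x₁ x₂ := by
  obtain ⟨hf2, ⟨-, -, -, hsym⟩, hhess, S, hS, hS2⟩ := hf
  have hfd : Differentiable ℝ f := hf2.differentiable two_ne_zero
  obtain ⟨U, hU⟩ := exists_forall_hasGradientAt_of_fderiv_symmetric (g := fun x => f (x, 0))
    (hfd.comp (differentiable_id.prodMk (differentiable_const 0))) fun x =>
      (hasFDerivAt_Jx1 (hfd (x, 0))).fderiv ▸ hsym x
  refine ⟨U, S, fun x => (hU x).differentiableAt, hS, fun x₁ x₂ => ?_⟩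
  have hslice : ContDiff ℝ 2 fun y => f (x₁, y) := hf2.comp (contDiff_const.prodMk contDiff_id)
  rw [hslice.eq_add_fderiv_of_fderiv_fderiv_apply_eq_zero (hhess x₁) x₂,
    (hasFDerivAt_Jx2 (hfd (x₁, 0))).fderiv, hS2, (hU x₁).gradient]

/-- Remark 3: every `f ∈ G_{L₁,L₂}` admits the decomposition
`f(x₁,x₂) = ∇U(x₁) + ∇²S(x₁)·x₂` for some scalar potentials `U` and `S`. -/
theorem memG_decomposition (n : ℕ) (L₁ L₂ : ℝ) (hL₂ : 0 ≤ L₂)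
    (f : Euc n × Euc n → Euc n) (hf : MemG L₁ L₂ f) :
    ∃ (U S : Euc n → ℝ), Differentiable ℝ U ∧ ContDiff ℝ 2 S ∧
      ∀ x₁ x₂ : Euc n,
        f (x₁, x₂) = gradient U x₁ + fderiv ℝ (gradient S) x₁ x₂ :=
  memG_decomposition_general n L₁ L₂ f hf
end
end
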